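/- arXiv:1308.4520 — 3 statements merged into one kernel-verified Lean document; each statement's English description precedes it below -/
import Mathlib

section
/- For d ≥ 3 and p = 2d/(d+2), there exists a constant c > 0 (depending only on d) such that for every f in ℓ²(Z^d) with ℓ²-norm 1, the sum over z in Z^d and unit vectors e of |f(z+e) - f(z)|^p is at least c. Equivalently, the infimum χ^d(Z^d) of this sum over all normalized f is strictly positive. -/
/-!
Apply the `ℓ¹` Gagliardo–Nirenberg–Sobolev inequality `‖u‖_{d/(d-1)} ≤ ‖∇u‖₁` on `ℤᵈ` (the
grid-lines inequality for counting measures, fed by telescoping along coordinate lines) to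
`u = |f|^s` with `s = 2(d-1)/d`, so that `‖u‖_{d/(d-1)} = ‖f‖₂^{2(d-1)/d} = 1`. The mean value
bound `|∇u| ≤ s (|f(z+e)|^{s-1} + |f(z)|^{s-1}) |∇f|` and Hölder's inequality with the exponents
`q = 2d/(d-2)` and `p = 2d/(d+2)` give `1 ≤ C ‖∇f‖_p`: since `(s-1) q = 2`, the `q`-th powers of
the weights sum to at most a multiple of `‖f‖₂² = 1`.
-/

open scoped ENNReal fwdDiff
open MeasureTheory Filter Topology Function

lemma lintegral_pi_count_eq_tsum {ι α : Type*} [Fintype ι] [MeasurableSpace α] [Countable α]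
    [MeasurableSingletonClass α] (F : (ι → α) → ℝ≥0∞) :
    ∫⁻ z, F z ∂Measure.pi (fun _ => Measure.count) = ∑' z, F z := by
  rw [lintegral_countable']
  simp

lemma ENNReal.tsum_mul_le_tsum_rpow_mul_tsum_rpow {α : Type*} [Countable α] {p q : ℝ}
    (hpq : p.HolderConjugate q) (f g : α → ℝ≥0∞) :
    ∑' a, f a * g a ≤ (∑' a, f a ^ p) ^ (1 / p) * (∑' a, g a ^ q) ^ (1 / q) := by
  let _ : MeasurableSpace α := ⊤
  have : MeasurableSingletonClass α := ⟨fun _ => MeasurableSpace.measurableSet_top⟩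
  simpa only [lintegral_count, Pi.mul_apply] using ENNReal.lintegral_mul_le_Lp_mul_Lq
    Measure.count hpq (measurable_of_countable f).aemeasurable
    (measurable_of_countable g).aemeasurable

lemma ENNReal.inv_rpow_le_of_one_le_mul_rpow {K E : ℝ≥0∞} {p : ℝ} (hp : 0 < p)
    (h : 1 ≤ K * E ^ (1 / p)) : K⁻¹ ^ p ≤ E := by
  have hK : K ≠ 0 := by rintro rfl; simp at h
  have hE : E ^ (1 / p) ≠ 0 := by
    intro h0
    rw [h0, mul_zero] at h
    exact one_ne_zero (le_zero_iff.1 h)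
  have hinv : K⁻¹ ≤ E ^ (1 / p) :=
    (ENNReal.inv_le_iff_le_mul (fun _ => hK) (fun _ => hE)).2 h
  calc K⁻¹ ^ p ≤ (E ^ (1 / p)) ^ p := ENNReal.rpow_le_rpow hinv hp.le
    _ = E := by rw [← ENNReal.rpow_mul, one_div_mul_cancel hp.ne', ENNReal.rpow_one]

lemma ENNReal.ofReal_le_ofReal_add_ofReal_abs_sub (a b : ℝ) :
    ENNReal.ofReal a ≤ ENNReal.ofReal b + ENNReal.ofReal |b - a| :=
  (ENNReal.ofReal_le_ofReal (by linarith [neg_abs_le (b - a)])).trans ENNReal.ofReal_add_le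

lemma ENNReal.ofReal_le_tsum_ofReal_abs_fwdDiff_of_tendsto {v : ℤ → ℝ}
    (hv : Tendsto v atTop (𝓝 0)) (t₀ : ℤ) :
    ENNReal.ofReal (v t₀) ≤ ∑' t, ENNReal.ofReal |Δ_[1] v t| := by
  set F : ℤ → ℝ≥0∞ := fun t => ENNReal.ofReal |Δ_[1] v t|
  have partial_sums (n : ℕ) :
      ENNReal.ofReal (v t₀) ≤ ENNReal.ofReal (v (t₀ + n)) + ∑ k ∈ Finset.range n, F (t₀ + k) := by
    induction n with
    | zero => simp
    | succ n ih =>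
      rw [Finset.sum_range_succ, ← add_assoc, add_right_comm]
      refine ih.trans (add_le_add_left ?_ _)
      simpa [F, fwdDiff, add_assoc] using
        ENNReal.ofReal_le_ofReal_add_ofReal_abs_sub (v (t₀ + n)) (v (t₀ + n + 1))
  have partial_le (n : ℕ) : ∑ k ∈ Finset.range n, F (t₀ + k) ≤ ∑' t, F t :=
    (ENNReal.sum_le_tsum _).trans
      (ENNReal.tsum_comp_le_tsum_of_injective (fun a b h => by simpa using h) F)
  have hlim : Tendsto (fun n : ℕ => ENNReal.ofReal (v (t₀ + n)) + ∑' t, F t) atTop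
      (𝓝 (∑' t, F t)) := by
    have hv' := (ENNReal.tendsto_ofReal hv).comp
      (tendsto_atTop_add_const_left _ t₀ tendsto_natCast_atTop_atTop)
    simpa using hv'.add_const (∑' t, F t)
  exact ge_of_tendsto hlim (Eventually.of_forall fun n =>
    (partial_sums n).trans (add_le_add le_rfl (partial_le n)))

lemma Real.rpow_sub_rpow_le_mul_rpow_sub_one_mul {s a b : ℝ} (hs : 1 ≤ s) (hb : 0 ≤ b)
    (hba : b ≤ a) : a ^ s - b ^ s ≤ s * a ^ (s - 1) * (a - b) := by
  rcases hba.eq_or_lt with rfl | hlt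
  · simp
  obtain ⟨c, hc, hslope⟩ := exists_hasDerivAt_eq_slope (fun x => x ^ s)
    (fun x => s * x ^ (s - 1)) hlt
    (fun x _ => (Real.hasDerivAt_rpow_const (Or.inr hs)).continuousAt.continuousWithinAt)
    (fun x _ => Real.hasDerivAt_rpow_const (Or.inr hs))
  rw [eq_div_iff (sub_ne_zero.2 hlt.ne')] at hslope
  rw [← hslope]
  gcongr <;> linarith [hc.1, hc.2]

lemma Real.abs_rpow_sub_rpow_le {s a b : ℝ} (hs : 1 ≤ s) (ha : 0 ≤ a) (hb : 0 ≤ b) :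
    |a ^ s - b ^ s| ≤ s * (a ^ (s - 1) + b ^ (s - 1)) * |a - b| := by
  wlog hba : b ≤ a generalizing a b
  · rw [abs_sub_comm, add_comm, abs_sub_comm a]
    exact this hb ha (le_of_not_ge hba)
  rw [abs_of_nonneg (sub_nonneg.2 (Real.rpow_le_rpow hb hba (by linarith))),
    abs_of_nonneg (sub_nonneg.2 hba)]
  calc a ^ s - b ^ s ≤ s * a ^ (s - 1) * (a - b) :=
        Real.rpow_sub_rpow_le_mul_rpow_sub_one_mul hs hb hba
    _ ≤ s * (a ^ (s - 1) + b ^ (s - 1)) * (a - b) := by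
        have := Real.rpow_nonneg hb (s - 1)
        gcongr; linarith

lemma update_add_single_one {ι : Type*} [DecidableEq ι] (z : ι → ℤ) (i : ι) (t : ℤ) :
    update z i t + Pi.single i 1 = update z i (t + 1) := by
  ext j
  rcases eq_or_ne j i with rfl | hj <;> simp [*]

lemma tsum_sum_comp_add_single_one {ι : Type*} [Fintype ι] [DecidableEq ι]
    (F : (ι → ℤ) → ℝ≥0∞) :
    ∑' z, ∑ i, F (z + (Pi.single i 1 : ι → ℤ)) = Fintype.card ι * ∑' z, F z := by
  have shift (i : ι) : ∑' z, F (z + Pi.single i 1) = ∑' z, F z :=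
    (Equiv.addRight (Pi.single i 1)).tsum_eq F
  rw [Summable.tsum_finsetSum fun _ _ => ENNReal.summable]
  simp [shift]

section Lattice

variable {ι : Type*} [Fintype ι] [DecidableEq ι]

noncomputable def gradNorm (u : (ι → ℤ) → ℝ) (z : ι → ℤ) : ℝ≥0∞ :=
  ∑ i, ENNReal.ofReal |Δ_[Pi.single i 1] u z|

lemma ofReal_le_tsum_gradNorm_update {u : (ι → ℤ) → ℝ} (hu : Tendsto u cofinite (𝓝 0))
    (z : ι → ℤ) (i : ι) :
    ENNReal.ofReal (u z) ≤ ∑' t, gradNorm u (update z i t) := by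
  have hline : Tendsto (fun t => u (update z i t)) atTop (𝓝 0) :=
    (hu.comp (update_injective z i).tendsto_cofinite).mono_left atTop_le_cofinite
  calc ENNReal.ofReal (u z) = ENNReal.ofReal (u (update z i (z i))) := by rw [update_eq_self]
    _ ≤ ∑' t, ENNReal.ofReal |Δ_[1] (fun t => u (update z i t)) t| :=
        ENNReal.ofReal_le_tsum_ofReal_abs_fwdDiff_of_tendsto hline (z i)
    _ ≤ ∑' t, gradNorm u (update z i t) := ENNReal.tsum_le_tsum fun t => by
        have hline_diff : Δ_[1] (fun t => u (update z i t)) t =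
            Δ_[Pi.single i 1] u (update z i t) := by
          simp only [fwdDiff, update_add_single_one]
        rw [hline_diff]
        exact Finset.single_le_sum
          (f := fun j => ENNReal.ofReal |Δ_[Pi.single j 1] u (update z i t)|)
          (fun _ _ => zero_le) (Finset.mem_univ i)

/-- The discrete Gagliardo–Nirenberg–Sobolev inequality `‖u‖_{n/(n-1)} ≤ ‖∇u‖₁` on `ℤⁿ`. -/
theorem tsum_ofReal_rpow_conjExponent_le (hι : 1 < Fintype.card ι) {u : (ι → ℤ) → ℝ}
    (hu : Tendsto u cofinite (𝓝 0)) :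
    ∑' z, ENNReal.ofReal (u z) ^ (Fintype.card ι : ℝ).conjExponent ≤
      (∑' z, gradNorm u z) ^ (Fintype.card ι : ℝ).conjExponent := by
  set n : ℝ := (Fintype.card ι : ℝ) with hn_def
  have hn : 1 < n := by rw [hn_def]; exact_mod_cast hι
  have hpt (z : ι → ℤ) : ENNReal.ofReal (u z) ^ n.conjExponent ≤
      ∏ i, (∫⁻ t, gradNorm u (update z i t) ∂Measure.count) ^ ((1 : ℝ) / (n - 1)) := by
    calc ENNReal.ofReal (u z) ^ n.conjExponent
        = ∏ _i : ι, ENNReal.ofReal (u z) ^ ((1 : ℝ) / (n - 1)) := by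
          rw [Finset.prod_const, Finset.card_univ, ← ENNReal.rpow_natCast, ← ENNReal.rpow_mul,
            ← hn_def, Real.conjExponent]
          congr 1
          field_simp
      _ ≤ _ := Finset.prod_le_prod' fun i _ => by
          rw [lintegral_count]
          gcongr
          exact ofReal_le_tsum_gradNorm_update hu z i
  calc ∑' z, ENNReal.ofReal (u z) ^ n.conjExponent
      ≤ ∑' z, ∏ i, (∫⁻ t, gradNorm u (update z i t) ∂Measure.count) ^ ((1 : ℝ) / (n - 1)) :=
        ENNReal.tsum_le_tsum hpt
    _ = ∫⁻ z, ∏ i, (∫⁻ t, gradNorm u (update z i t) ∂Measure.count) ^ ((1 : ℝ) / (n - 1))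
          ∂Measure.pi fun _ => Measure.count := (lintegral_pi_count_eq_tsum _).symm
    _ ≤ (∫⁻ z, gradNorm u z ∂Measure.pi fun _ => Measure.count) ^ n.conjExponent :=
        lintegral_prod_lintegral_pow_le _ (.conjExponent hn) (measurable_of_countable _)
    _ = (∑' z, gradNorm u z) ^ n.conjExponent := by rw [lintegral_pi_count_eq_tsum]

lemma one_le_tsum_gradNorm_abs_rpow (hι : 1 < Fintype.card ι) {s : ℝ}
    (hs : s * (Fintype.card ι : ℝ).conjExponent = 2) {f : (ι → ℤ) → ℝ}
    (hsum : Summable fun z => f z ^ 2) (hnorm : ∑' z, f z ^ 2 = 1) :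
    1 ≤ ∑' z, gradNorm (fun z => |f z| ^ s) z := by
  have hr : 0 < (Fintype.card ι : ℝ).conjExponent :=
    (Real.HolderConjugate.conjExponent (by exact_mod_cast hι)).symm.pos
  have hs0 : 0 < s := pos_of_mul_pos_left (by rw [hs]; norm_num) hr.le
  have hu : Tendsto (fun z => |f z| ^ s) cofinite (𝓝 0) := by
    have h := hsum.tendsto_cofinite_zero.sqrt.rpow_const (Or.inr hs0.le)
    simpa [Real.sqrt_sq_eq_abs, Real.zero_rpow hs0.ne'] using h
  have hpow (z : ι → ℤ) : ENNReal.ofReal (|f z| ^ s) ^ (Fintype.card ι : ℝ).conjExponent =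
      ENNReal.ofReal (f z ^ 2) := by
    rw [ENNReal.ofReal_rpow_of_nonneg (by positivity) hr.le, ← Real.rpow_mul (abs_nonneg _), hs,
      Real.rpow_two, sq_abs]
  have key := tsum_ofReal_rpow_conjExponent_le hι hu
  simp only [hpow] at key
  rw [← ENNReal.ofReal_tsum_of_nonneg (fun z => sq_nonneg _) hsum, hnorm, ENNReal.ofReal_one,
    ← ENNReal.one_rpow (Fintype.card ι : ℝ).conjExponent, ENNReal.rpow_le_rpow_iff hr] at key
  exact key

noncomputable def energy (p : ℝ) (f : (ι → ℤ) → ℝ) : ℝ≥0∞ :=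
  ∑' z, ∑' i, ENNReal.ofReal (|Δ_[Pi.single i 1] f z| ^ p)

noncomputable def chainWeight (s : ℝ) (f : (ι → ℤ) → ℝ) (z : ι → ℤ) (i : ι) : ℝ≥0∞ :=
  ENNReal.ofReal (s * (|f (z + Pi.single i 1)| ^ (s - 1) + |f z| ^ (s - 1)))

lemma gradNorm_abs_rpow_le {s : ℝ} (hs : 1 ≤ s) (f : (ι → ℤ) → ℝ) (z : ι → ℤ) :
    gradNorm (fun z => |f z| ^ s) z ≤
      ∑ i, chainWeight s f z i * ENNReal.ofReal |Δ_[Pi.single i 1] f z| := by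
  refine Finset.sum_le_sum fun i _ => ?_
  have hw : 0 ≤ s * (|f (z + Pi.single i 1)| ^ (s - 1) + |f z| ^ (s - 1)) :=
    mul_nonneg (by linarith) (by positivity)
  rw [chainWeight, ← ENNReal.ofReal_mul hw]
  unfold fwdDiff
  refine ENNReal.ofReal_le_ofReal
    ((Real.abs_rpow_sub_rpow_le hs (abs_nonneg _) (abs_nonneg _)).trans
      (mul_le_mul_of_nonneg_left (abs_abs_sub_abs_le_abs_sub _ _) hw))

lemma tsum_sum_chainWeight_rpow_le {s q : ℝ} (hs : 0 ≤ s) (hq : 1 ≤ q) (hsq : (s - 1) * q = 2)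
    (f : (ι → ℤ) → ℝ) :
    ∑' z, ∑ i, chainWeight s f z i ^ q ≤
      ENNReal.ofReal s ^ q * 2 ^ (q - 1) *
        (2 * Fintype.card ι * ∑' z, ENNReal.ofReal (f z ^ 2)) := by
  have hpow (x : ℝ) : ENNReal.ofReal (|x| ^ (s - 1)) ^ q = ENNReal.ofReal (x ^ 2) := by
    rw [ENNReal.ofReal_rpow_of_nonneg (by positivity) (by linarith),
      ← Real.rpow_mul (abs_nonneg x), hsq, Real.rpow_two, sq_abs]
  have hpt (z : ι → ℤ) (i : ι) : chainWeight s f z i ^ q ≤ ENNReal.ofReal s ^ q * 2 ^ (q - 1) *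
      (ENNReal.ofReal (f (z + Pi.single i 1) ^ 2) + ENNReal.ofReal (f z ^ 2)) := by
    rw [chainWeight, ENNReal.ofReal_mul hs, ENNReal.ofReal_add (by positivity) (by positivity),
      ENNReal.mul_rpow_of_nonneg _ _ (by linarith), mul_assoc, ← hpow, ← hpow]
    gcongr
    exact ENNReal.rpow_add_le_mul_rpow_add_rpow _ _ hq
  calc ∑' z, ∑ i, chainWeight s f z i ^ q
      ≤ ∑' z, ∑ i, ENNReal.ofReal s ^ q * 2 ^ (q - 1) *
          (ENNReal.ofReal (f (z + Pi.single i 1) ^ 2) + ENNReal.ofReal (f z ^ 2)) :=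
        ENNReal.tsum_le_tsum fun z => Finset.sum_le_sum fun i _ => hpt z i
    _ = ENNReal.ofReal s ^ q * 2 ^ (q - 1) *
          (2 * Fintype.card ι * ∑' z, ENNReal.ofReal (f z ^ 2)) := by
        simp_rw [← Finset.mul_sum, ENNReal.tsum_mul_left, Finset.sum_add_distrib, ENNReal.tsum_add,
          tsum_sum_comp_add_single_one (fun z => ENNReal.ofReal (f z ^ 2))]
        simp only [Finset.sum_const, Finset.card_univ, nsmul_eq_mul, ENNReal.tsum_mul_left]
        ring

theorem one_le_rpow_mul_energy_rpow (hι : 1 < Fintype.card ι) {s p q : ℝ} (hs : 1 ≤ s)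
    (hqp : q.HolderConjugate p) (hsq : (s - 1) * q = 2)
    (hsr : s * (Fintype.card ι : ℝ).conjExponent = 2) {f : (ι → ℤ) → ℝ}
    (hsum : Summable fun z => f z ^ 2) (hnorm : ∑' z, f z ^ 2 = 1) :
    1 ≤ (ENNReal.ofReal s ^ q * 2 ^ (q - 1) * (2 * Fintype.card ι)) ^ (1 / q) *
      energy p f ^ (1 / p) := by
  have hl2 : ∑' z, ENNReal.ofReal (f z ^ 2) = 1 := by
    rw [← ENNReal.ofReal_tsum_of_nonneg (fun z => sq_nonneg _) hsum, hnorm, ENNReal.ofReal_one]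
  set W := fun w : (ι → ℤ) × ι => chainWeight s f w.1 w.2
  set G := fun w : (ι → ℤ) × ι => ENNReal.ofReal |Δ_[Pi.single w.2 1] f w.1|
  have hW : ∑' w, W w ^ q ≤ ENNReal.ofReal s ^ q * 2 ^ (q - 1) * (2 * Fintype.card ι) := by
    rw [ENNReal.tsum_prod']
    simp_rw [tsum_fintype]
    simpa [hl2] using tsum_sum_chainWeight_rpow_le (by linarith) hqp.lt.le hsq f
  have hG : ∑' w, G w ^ p = energy p f := by
    rw [energy, ENNReal.tsum_prod']
    simp only [G, ENNReal.ofReal_rpow_of_nonneg (abs_nonneg _) hqp.symm.nonneg]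
  calc 1 ≤ ∑' z, gradNorm (fun z => |f z| ^ s) z :=
        one_le_tsum_gradNorm_abs_rpow hι hsr hsum hnorm
    _ ≤ ∑' w, W w * G w := by
        rw [ENNReal.tsum_prod']
        exact ENNReal.tsum_le_tsum fun z =>
          (gradNorm_abs_rpow_le hs f z).trans_eq (tsum_fintype _).symm
    _ ≤ (∑' w, W w ^ q) ^ (1 / q) * (∑' w, G w ^ p) ^ (1 / p) :=
        ENNReal.tsum_mul_le_tsum_rpow_mul_tsum_rpow hqp W G
    _ ≤ _ := by
        rw [hG]
        gcongr
        exact one_div_nonneg.2 hqp.nonneg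

theorem exists_pos_ofReal_le_energy (hι : 1 < Fintype.card ι) {s p q : ℝ} (hs : 1 ≤ s)
    (hqp : q.HolderConjugate p) (hsq : (s - 1) * q = 2)
    (hsr : s * (Fintype.card ι : ℝ).conjExponent = 2) :
    ∃ c : ℝ, 0 < c ∧ ∀ f : (ι → ℤ) → ℝ, Summable (fun z => f z ^ 2) → ∑' z, f z ^ 2 = 1 →
      ENNReal.ofReal c ≤ energy p f := by
  set K : ℝ≥0∞ := (ENNReal.ofReal s ^ q * 2 ^ (q - 1) * (2 * Fintype.card ι)) ^ (1 / q)
  have hp := hqp.symm.pos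
  have hK : K ≠ 0 ∧ K ≠ ∞ := by
    have hq := hqp.pos
    have hs0 : 0 < s := by linarith
    have hι0 : Fintype.card ι ≠ 0 := by omega
    constructor <;> simp [K, ENNReal.rpow_eq_zero_iff, ENNReal.mul_eq_top, hq, hq.le, hs0, hι0]
  refine ⟨(K⁻¹ ^ p).toReal, ENNReal.toReal_pos (by simp [hK.2, hp.le]) (by simp [hK.1, hp.le]),
    fun f hsum hnorm => ?_⟩
  rw [ENNReal.ofReal_toReal (by simp [hK.1, hp.le])]
  exact ENNReal.inv_rpow_le_of_one_le_mul_rpow hp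
    (one_le_rpow_mul_energy_rpow hι hs hqp hsq hsr hsum hnorm)

end Lattice

/-- For d ≥ 3 and p = 2d/(d+2), the discrete p-energy of any ℓ²-normalized
function on ℤ^d is bounded below by a positive constant depending only on d;
equivalently, χ^d(ℤ^d) > 0. -/
theorem chiD_pos_of_dim_ge_three (d : ℕ) (hd : 3 ≤ d) :
    ∃ c : ℝ, 0 < c ∧ ∀ f : (Fin d → ℤ) → ℝ,
      Summable (fun z => (f z) ^ 2) → ∑' z : Fin d → ℤ, (f z) ^ 2 = 1 →
      ENNReal.ofReal c ≤ ∑' (z : Fin d → ℤ) (e : Fin d),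
        ENNReal.ofReal (|f (z + Pi.single e 1) - f z| ^ (2 * (d : ℝ) / ((d : ℝ) + 2))) := by
  have hd' : (3 : ℝ) ≤ d := by exact_mod_cast hd
  have hd1 : (d : ℝ) - 1 ≠ 0 := by linarith
  have hd2 : (d : ℝ) - 2 ≠ 0 := by linarith
  refine exists_pos_ofReal_le_energy (ι := Fin d) (s := 2 * ((d : ℝ) - 1) / d)
    (q := 2 * (d : ℝ) / ((d : ℝ) - 2)) (by rw [Fintype.card_fin]; omega) ?_ ?_ ?_ ?_
  · rw [le_div_iff₀ (by linarith)]
    linarith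
  · rw [Real.holderConjugate_iff]
    refine ⟨by rw [lt_div_iff₀ (by linarith)]; linarith, ?_⟩
    field_simp
    ring
  · field_simp
    ring
  · rw [Fintype.card_fin, Real.conjExponent]
    field_simp
end

section
/- If η > d/2 then χ^d(Q_n) → 0 as n → ∞, where Q_n = [-n,n]^d ∩ Z^d. In particular χ^d(Z^d) = 0 when η > d/2. -/
/-!
Test the variational problem with the normalized tensor product of the tent profile
`k ↦ max (n + 1 - |k|) 0`, supported in the cube `[-n, n]^d`. In one dimension its squared
ℓ²-norm is at least `(n + 1)^3 / 3` while its increments are at most `1`, so after normalization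
every discrete partial derivative is `O(n^{-(d+2)/2})`; as only `O(n^d)` of them are nonzero, the
energy is `O(n^{d - p(d+2)/2})`. With `p = 2η/(η+1)` this exponent is negative exactly when
`η > d/2`. Enlarging the allowed support only decreases `χ^d`, which gives `χ^d(ℤ^d) = 0`.
-/

open scoped ENNReal

/-- The discrete variational constant χ^d(B) for B ⊆ ℤ^d with exponent `p`. -/
noncomputable def chiD (d : ℕ) (p : ℝ) (B : Set (Fin d → ℤ)) : ℝ≥0∞ :=
  ⨅ g : {g : (Fin d → ℤ) → ℝ // Summable (fun z => (g z) ^ 2) ∧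
      (∑' z : Fin d → ℤ, (g z) ^ 2) = 1 ∧ Function.support g ⊆ B},
    ∑' (z : Fin d → ℤ) (e : Fin d), ENNReal.ofReal (|g.1 (z + Pi.single e 1) - g.1 z| ^ p)

open Filter Topology Finset

section Chi

variable {d : ℕ} {p : ℝ}

lemma chiD_anti {B B' : Set (Fin d → ℤ)} (h : B ⊆ B') : chiD d p B' ≤ chiD d p B :=
  iInf_mono' fun g => ⟨⟨g.1, g.2.1, g.2.2.1, g.2.2.2.trans h⟩, le_rfl⟩

lemma chiD_le_of_finset {B : Set (Fin d → ℤ)} (g : (Fin d → ℤ) → ℝ)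
    (T : Finset (Fin d → ℤ)) (hgT : ∀ z ∉ T, g z = 0) (hTB : ↑T ⊆ B)
    (hg : ∑ z ∈ T, g z ^ 2 = 1) :
    chiD d p B ≤ ∑' (z : Fin d → ℤ) (e : Fin d),
      ENNReal.ofReal (|g (z + Pi.single e 1) - g z| ^ p) := by
  have hvan : ∀ z ∉ T, g z ^ 2 = 0 := fun z hz => by simp [hgT z hz]
  have hsupp : Function.support g ⊆ B := fun z hz => hTB (by_contra fun h => hz (hgT z h))
  exact iInf_le_of_le ⟨g, summable_of_ne_finset_zero hvan, (tsum_eq_sum hvan).trans hg, hsupp⟩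
    le_rfl

lemma tsum_ofReal_abs_sub_rpow_le (hp : 0 < p) (g : (Fin d → ℤ) → ℝ)
    (T : Finset (Fin d → ℤ)) (hT : ∀ z ∉ T, ∀ e, g (z + Pi.single e 1) - g z = 0)
    {M : ℝ} (hM : ∀ z e, |g (z + Pi.single e 1) - g z| ≤ M) :
    ∑' (z : Fin d → ℤ) (e : Fin d), ENNReal.ofReal (|g (z + Pi.single e 1) - g z| ^ p) ≤
      (#T * d : ℝ≥0∞) * ENNReal.ofReal (M ^ p) := by
  simp only [tsum_fintype]
  rw [tsum_eq_sum fun z hz => by simp [hT z hz, Real.zero_rpow hp.ne']]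
  calc ∑ z ∈ T, ∑ e, ENNReal.ofReal (|g (z + Pi.single e 1) - g z| ^ p)
      ≤ ∑ _z ∈ T, ∑ _e : Fin d, ENNReal.ofReal (M ^ p) := by
        gcongr with z _ e
        exact hM z e
    _ = (#T * d : ℝ≥0∞) * ENNReal.ofReal (M ^ p) := by simp [mul_assoc]

end Chi

def tent (r : ℝ) (k : ℤ) : ℝ := max (r - |(k : ℝ)|) 0

lemma tent_nonneg (r : ℝ) (k : ℤ) : 0 ≤ tent r k := le_max_right _ _

lemma tent_le {r : ℝ} (hr : 0 ≤ r) (k : ℤ) : tent r k ≤ r :=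
  max_le (sub_le_self _ (abs_nonneg _)) hr

lemma abs_tent_add_one_sub_le (r : ℝ) (k : ℤ) : |tent r (k + 1) - tent r k| ≤ 1 :=
  calc |tent r (k + 1) - tent r k| ≤ |(r - |(k : ℝ) + 1|) - (r - |(k : ℝ)|)| := by
        simpa [tent] using abs_max_sub_max_le_abs (r - |(k : ℝ) + 1|) (r - |(k : ℝ)|) 0
    _ = |(|(k : ℝ)| - |(k : ℝ) + 1|)| := by ring_nf
    _ ≤ |(k : ℝ) - (k + 1)| := abs_abs_sub_abs_le_abs_sub _ _
    _ = 1 := by norm_num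

lemma tent_eq_zero_of_notMem (n : ℕ) {k : ℤ} (hk : k ∉ Icc (-(n : ℤ)) n) :
    tent (n + 1) k = 0 := by
  have : (n : ℝ) + 1 ≤ |(k : ℝ)| := by
    rw [mem_Icc, not_and_or, not_le, not_le] at hk
    rcases hk with hk | hk
    · have : (k : ℝ) ≤ -(n + 1) := by exact_mod_cast (by omega : k ≤ -(n + 1))
      linarith [neg_le_abs (k : ℝ)]
    · have : (n : ℝ) + 1 ≤ k := by exact_mod_cast (by omega : (n : ℤ) + 1 ≤ k)
      linarith [le_abs_self (k : ℝ)]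
  exact max_eq_right (by linarith)

lemma cube_div_three_le_sum_sq (m : ℕ) :
    (m : ℝ) ^ 3 / 3 ≤ ∑ j ∈ range m, ((j : ℝ) + 1) ^ 2 := by
  induction m with
  | zero => simp
  | succ k ih =>
    rw [sum_range_succ]
    push_cast
    nlinarith [(k.cast_nonneg : (0 : ℝ) ≤ k)]

lemma cube_div_three_le_sum_tent_sq (n : ℕ) :
    ((n : ℝ) + 1) ^ 3 / 3 ≤ ∑ k ∈ Icc (-(n : ℤ)) n, tent (n + 1) k ^ 2 := by
  have hinj : Set.InjOn (fun j : ℕ => (n : ℤ) - j) (range (n + 1)) :=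
    fun a _ b _ h => by simpa using h
  calc ((n : ℝ) + 1) ^ 3 / 3 ≤ ∑ j ∈ range (n + 1), ((j : ℝ) + 1) ^ 2 := by
        exact_mod_cast cube_div_three_le_sum_sq (n + 1)
    _ = ∑ k ∈ (range (n + 1)).image fun j : ℕ => (n : ℤ) - j, tent (n + 1) k ^ 2 := by
        rw [sum_image hinj]
        refine sum_congr rfl fun j hj => ?_
        have hj : (j : ℝ) ≤ n := by exact_mod_cast Nat.lt_succ_iff.mp (mem_range.mp hj)
        rw [tent, Int.cast_sub, Int.cast_natCast, Int.cast_natCast,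
          abs_of_nonneg (by linarith), max_eq_left (by linarith)]
        ring
    _ ≤ ∑ k ∈ Icc (-(n : ℤ)) n, tent (n + 1) k ^ 2 := by
        refine sum_le_sum_of_subset_of_nonneg ?_ fun _ _ _ => sq_nonneg _
        intro k hk
        obtain ⟨j, hj, rfl⟩ := mem_image.mp hk
        have := mem_range.mp hj
        rw [mem_Icc]
        omega

section Tensor

variable {ι : Type*} [Fintype ι] [DecidableEq ι] (f : ℤ → ℝ)

lemma sum_piFinset_prod_sq (s : Finset ℤ) :
    ∑ z ∈ Fintype.piFinset fun _ : ι => s, (∏ i, f (z i)) ^ 2 =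
      (∑ k ∈ s, f k ^ 2) ^ Fintype.card ι := by
  rw [← card_univ, ← prod_const, prod_univ_sum]
  simp_rw [prod_pow]

lemma prod_eq_zero_of_notMem_piFinset {s : Finset ℤ} (hf : ∀ k ∉ s, f k = 0) {z : ι → ℤ}
    (hz : z ∉ Fintype.piFinset fun _ => s) : ∏ i, f (z i) = 0 := by
  obtain ⟨i, hi⟩ := not_forall.mp (Fintype.mem_piFinset.not.mp hz)
  exact prod_eq_zero (mem_univ i) (hf _ hi)

lemma prod_add_single_sub_prod (z : ι → ℤ) (e : ι) :
    ∏ i, f ((z + Pi.single e 1 : ι → ℤ) i) - ∏ i, f (z i) =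
      (f (z e + 1) - f (z e)) * ∏ i ∈ univ.erase e, f (z i) := by
  rw [← mul_prod_erase _ _ (mem_univ e), ← mul_prod_erase _ (fun i => f (z i)) (mem_univ e),
    prod_congr rfl fun i hi => by rw [Pi.add_apply, Pi.single_eq_of_ne (ne_of_mem_erase hi),
      add_zero]]
  simp [sub_mul]

lemma abs_prod_add_single_sub_prod_le {a b : ℝ} (h0 : ∀ k, 0 ≤ f k) (ha : ∀ k, f k ≤ a)
    (hb : ∀ k, |f (k + 1) - f k| ≤ b) (z : ι → ℤ) (e : ι) :
    |∏ i, f ((z + Pi.single e 1 : ι → ℤ) i) - ∏ i, f (z i)| ≤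
      b * a ^ (Fintype.card ι - 1) := by
  rw [prod_add_single_sub_prod, abs_mul, abs_of_nonneg (prod_nonneg fun i _ => h0 _)]
  refine mul_le_mul (hb _) ?_ (prod_nonneg fun i _ => h0 _) ((abs_nonneg _).trans (hb 0))
  calc ∏ i ∈ univ.erase e, f (z i) ≤ ∏ _i ∈ univ.erase e, a :=
          prod_le_prod (fun i _ => h0 _) fun i _ => ha _
    _ = a ^ (Fintype.card ι - 1) := by rw [prod_const, card_erase_of_mem (mem_univ e), card_univ]

lemma prod_add_single_sub_prod_eq_zero {lo up : ℤ} (hf : ∀ k ∉ Icc lo up, f k = 0)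
    {z : ι → ℤ} (hz : z ∉ Fintype.piFinset fun _ => Icc (lo - 1) up) (e : ι) :
    ∏ i, f ((z + Pi.single e 1 : ι → ℤ) i) - ∏ i, f (z i) = 0 := by
  obtain ⟨i, hi⟩ := not_forall.mp (Fintype.mem_piFinset.not.mp hz)
  rw [mem_Icc] at hi
  have hshift : (z + Pi.single e 1 : ι → ℤ) i ∉ Icc lo up := by
    rcases eq_or_ne i e with rfl | hie
    · simp only [Pi.add_apply, Pi.single_eq_same, mem_Icc]; omega
    · simp only [Pi.add_apply, Pi.single_eq_of_ne hie, add_zero, mem_Icc]; omega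
  rw [prod_eq_zero (mem_univ i) (hf _ hshift),
    prod_eq_zero (mem_univ i) (hf _ (by rw [mem_Icc]; omega)), sub_zero]

end Tensor

lemma sq_inv_mul_div_pow_le {k : ℕ} {r s : ℝ} (hr : 0 < r) (hs : r ^ 3 / 3 ≤ s ^ 2) :
    (1 / s * (r / s) ^ k) ^ 2 ≤ 3 ^ (k + 1) / r ^ (k + 3) := by
  have hs2 : 0 < s ^ 2 := lt_of_lt_of_le (by positivity) hs
  calc (1 / s * (r / s) ^ k) ^ 2 = 1 / s ^ 2 * (r ^ 2 / s ^ 2) ^ k := by ring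
    _ ≤ 1 / (r ^ 3 / 3) * (r ^ 2 / (r ^ 3 / 3)) ^ k := by gcongr
    _ = 3 / r ^ 3 * (3 / r) ^ k := by
      rw [one_div_div, show r ^ 2 / (r ^ 3 / 3) = 3 / r by field_simp]
    _ = 3 ^ (k + 1) / r ^ (k + 3) := by rw [div_pow]; field_simp; ring

lemma two_mul_pow_mul_rpow_le {d : ℕ} {p r s : ℝ} (hp : 0 < p) (hr : 0 < r) (hs0 : 0 ≤ s)
    (hs : r ^ 3 / 3 ≤ s ^ 2) :
    (2 * r) ^ d * d * (1 / s * (r / s) ^ (d - 1)) ^ p ≤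
      d * 2 ^ d * 3 ^ (p * d / 2) * r ^ ((d : ℝ) - p * (d + 2) / 2) := by
  cases d with
  | zero => simp
  | succ k =>
    rw [Nat.add_sub_cancel]
    set M := 1 / s * (r / s) ^ k
    have hM : M ^ p ≤ 3 ^ (p * (k + 1 : ℕ) / 2) * r ^ (-(p * ((k + 1 : ℕ) + 2) / 2)) :=
      calc M ^ p = (M ^ 2) ^ (p / 2) := by
            rw [← Real.rpow_natCast, ← Real.rpow_mul (by positivity)]; ring_nf
        _ ≤ (3 ^ (k + 1) / r ^ (k + 3)) ^ (p / 2) := by gcongr; exact sq_inv_mul_div_pow_le hr hs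
        _ = _ := by
            rw [Real.div_rpow (by positivity) (by positivity), ← Real.rpow_natCast,
              ← Real.rpow_natCast r, ← Real.rpow_mul (by norm_num), ← Real.rpow_mul hr.le,
              div_eq_mul_inv, ← Real.rpow_neg hr.le]
            push_cast; ring_nf
    calc (2 * r) ^ (k + 1) * (k + 1 : ℕ) * M ^ p
        ≤ (2 * r) ^ (k + 1) * (k + 1 : ℕ) *
            (3 ^ (p * (k + 1 : ℕ) / 2) * r ^ (-(p * ((k + 1 : ℕ) + 2) / 2))) := by gcongr
      _ = _ := by
        rw [mul_pow, ← Real.rpow_natCast r, sub_eq_add_neg, Real.rpow_add hr]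
        ring

theorem chiD_cube_le (d n : ℕ) {p : ℝ} (hp : 0 < p) :
    chiD d p {z | ∀ i, z i ∈ Set.Icc (-(n : ℤ)) n} ≤
      ENNReal.ofReal
        (d * 2 ^ d * 3 ^ (p * d / 2) * ((n : ℝ) + 1) ^ ((d : ℝ) - p * (d + 2) / 2)) := by
  set r : ℝ := n + 1
  have hr : 0 < r := by positivity
  set S := ∑ k ∈ Icc (-(n : ℤ)) n, tent r k ^ 2
  have hS : r ^ 3 / 3 ≤ S := cube_div_three_le_sum_tent_sq n
  have hS0 : 0 < S := lt_of_lt_of_le (by positivity) hS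
  set s := √S
  have hs : 0 < s := Real.sqrt_pos.mpr hS0
  set f : ℤ → ℝ := fun k => tent r k / s
  have hf : ∀ k ∉ Icc (-(n : ℤ)) n, f k = 0 := fun k hk => by
    simp only [f, r, tent_eq_zero_of_notMem n hk, zero_div]
  have hfb : ∀ k, |f (k + 1) - f k| ≤ 1 / s := fun k => by
    rw [← sub_div, abs_div, abs_of_pos hs]
    exact div_le_div_of_nonneg_right (abs_tent_add_one_sub_le r k) hs.le
  set g : (Fin d → ℤ) → ℝ := fun z => ∏ i, f (z i)
  set T := Fintype.piFinset fun _ : Fin d => Icc (-(n : ℤ) - 1) n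
  have hT : #T = (2 * (n + 1)) ^ d := by
    simp only [T, Fintype.card_piFinset, Int.card_Icc, prod_const, card_univ, Fintype.card_fin]
    congr 1; omega
  calc chiD d p _
      ≤ ∑' (z : Fin d → ℤ) (e : Fin d),
          ENNReal.ofReal (|g (z + Pi.single e 1) - g z| ^ p) := by
        refine chiD_le_of_finset g _ (fun _ hz => prod_eq_zero_of_notMem_piFinset f hf hz) ?_ ?_
        · intro z hz i
          simpa using Fintype.mem_piFinset.mp (mem_coe.mp hz) i
        · rw [sum_piFinset_prod_sq]
          simp only [f, div_pow, ← sum_div, s, Real.sq_sqrt hS0.le]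
          exact div_self (pow_ne_zero _ hS0.ne')
    _ ≤ (#T * d : ℝ≥0∞) * ENNReal.ofReal ((1 / s * (r / s) ^ (d - 1)) ^ p) := by
        refine tsum_ofReal_abs_sub_rpow_le hp g T
          (fun z hz e => prod_add_single_sub_prod_eq_zero f hf hz e) fun z e => ?_
        simpa only [Fintype.card_fin] using abs_prod_add_single_sub_prod_le f
          (fun k => div_nonneg (tent_nonneg r k) hs.le)
          (fun k => div_le_div_of_nonneg_right (tent_le hr.le k) hs.le) hfb z e
    _ = ENNReal.ofReal ((2 * r) ^ d * d * (1 / s * (r / s) ^ (d - 1)) ^ p) := by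
        rw [ENNReal.ofReal_mul (by positivity), ENNReal.ofReal_mul (by positivity),
          show (2 * r) ^ d = ((#T : ℕ) : ℝ) by rw [hT]; push_cast; ring,
          ENNReal.ofReal_natCast, ENNReal.ofReal_natCast]
    _ ≤ _ := ENNReal.ofReal_le_ofReal <| two_mul_pow_mul_rpow_le hp hr hs.le
        (by rwa [Real.sq_sqrt hS0.le])

lemma tendsto_ofReal_mul_rpow_of_neg (K : ℝ) {α : ℝ} (hα : α < 0) :
    Tendsto (fun n : ℕ => ENNReal.ofReal (K * ((n : ℝ) + 1) ^ α)) atTop (𝓝 0) := by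
  have hpow : Tendsto (fun n : ℕ => ((n : ℝ) + 1) ^ α) atTop (𝓝 0) := by
    simpa [Function.comp_def] using (tendsto_rpow_neg_atTop (neg_pos.mpr hα)).comp
      (tendsto_atTop_add_const_right _ 1 tendsto_natCast_atTop_atTop)
  simpa using ENNReal.tendsto_ofReal (hpow.const_mul K)

theorem chiD_tendsto_zero_general (d : ℕ) (η : ℝ) (hη : (d : ℝ) / 2 < η) :
    Filter.Tendsto
      (fun n : ℕ => chiD d (2 * η / (η + 1)) {z | ∀ i, z i ∈ Set.Icc (-(n : ℤ)) n})
      Filter.atTop (nhds 0)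
    ∧ chiD d (2 * η / (η + 1)) Set.univ = 0 := by
  have hη0 : 0 < η := lt_of_le_of_lt (by positivity) hη
  set p := 2 * η / (η + 1)
  have hp : 0 < p := by positivity
  have hα : (d : ℝ) - p * (d + 2) / 2 < 0 := by
    rw [sub_neg, mul_div_assoc, div_mul_div_comm, lt_div_iff₀ (by positivity)]
    nlinarith
  have hcube := tendsto_of_tendsto_of_tendsto_of_le_of_le tendsto_const_nhds
    (tendsto_ofReal_mul_rpow_of_neg _ hα) (fun _ => zero_le) (chiD_cube_le d · hp)
  exact ⟨hcube, le_antisymm (ge_of_tendsto' hcube fun n => chiD_anti (Set.subset_univ _))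
    zero_le⟩

/-- If η > d/2 then χ^d(Q_n) → 0 as n → ∞, where Q_n = [-n,n]^d ∩ ℤ^d;
in particular χ^d(ℤ^d) = 0. -/
theorem chiD_tendsto_zero (d : ℕ) (hd : 1 ≤ d) (η : ℝ) (hη : (d : ℝ) / 2 < η) :
    Filter.Tendsto
      (fun n : ℕ => chiD d (2 * η / (η + 1)) {z | ∀ i, z i ∈ Set.Icc (-(n : ℤ)) n})
      Filter.atTop (nhds 0)
    ∧ chiD d (2 * η / (η + 1)) Set.univ = 0 :=
  chiD_tendsto_zero_general d η hη
end

section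
/- Assume η ≥ d/2 and let p = 2η/(η+1). Then χ^d(Q_n) converges to χ^d(Z^d) as n → ∞, where Q_n = [-n,n]^d ∩ Z^d. -/
/-!
Cut a normalized `g` on `ℤ^d` off by `ξ_n(z) = min 1 (max 0 (2 - ‖z‖ / n))` and renormalize.
By the product rule `|∇(ξ_n g)| ≤ |∇g| + |g| / n`, the second term being supported on the
annulus `n - 1 < ‖z‖ ≤ 2n + 1`. Hölder with exponents `2` and `2p/(2-p)` bounds the `p`-th
powers of that term by `n^(-p) (#annulus)^(1-p/2) (∑_annulus g²)^(p/2)`, which is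
`O(n^(d(1-p/2) - p)) · o(1)`; and `d(1 - p/2) ≤ p` is exactly `η ≥ d/2` for `p = 2η/(η+1)`.
Hence `χ(Q_{2n})` is asymptotically at most the energy of `g`. The reverse inequality, and
monotonicity in `n`, hold because `χ` is antitone in the set.
-/

open scoped ENNReal

open Filter Topology Finset

/-- Replaces Minkowski (`p > 1`) and subadditivity (`p ≤ 1`) uniformly in `p`, at the cost of a
factor `(1 + δ)^p` that is removed at the end by letting `δ → 0`. -/
lemma add_rpow_le_one_add_rpow_mul_add {p a b δ : ℝ} (hp : 0 ≤ p) (ha : 0 ≤ a) (hb : 0 ≤ b)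
    (hδ : 0 < δ) : (a + b) ^ p ≤ (1 + δ) ^ p * a ^ p + (1 + δ⁻¹) ^ p * b ^ p := by
  rw [← Real.mul_rpow (by positivity) ha, ← Real.mul_rpow (by positivity) hb]
  rcases le_or_gt b (δ * a) with h | h
  · refine (Real.rpow_le_rpow (by positivity) ?_ hp).trans
      (le_add_of_nonneg_right (by positivity))
    linarith
  · refine (Real.rpow_le_rpow (by positivity) ?_ hp).trans
      (le_add_of_nonneg_left (by positivity))
    have : a < δ⁻¹ * b := by rwa [lt_inv_mul_iff₀ hδ]
    linarith

lemma sum_abs_rpow_le_sum_sq_rpow_mul_card_rpow {ι : Type*} {p : ℝ} (hp : 0 < p) (hp2 : p < 2)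
    (s : Finset ι) (f : ι → ℝ) :
    ∑ i ∈ s, |f i| ^ p ≤ (∑ i ∈ s, f i ^ 2) ^ (p / 2) * (#s : ℝ) ^ (1 - p / 2) := by
  have hq : Real.HolderTriple 2 (2 * p / (2 - p)) p :=
    ⟨by field_simp; ring, two_pos, div_pos (by positivity) (by linarith)⟩
  have := Real.Lr_rpow_le_Lp_mul_Lq s f (fun _ => 1) hq
  simp only [mul_one, abs_one, Real.one_rpow, sum_const, nsmul_eq_mul] at this
  convert this using 3
  · exact sum_congr rfl fun i _ => by rw [Real.rpow_two, sq_abs]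
  · field_simp

lemma le_of_forall_pos_le_ofReal_one_add_rpow_mul {x y : ℝ≥0∞} {p : ℝ}
    (h : ∀ δ : ℝ, 0 < δ → x ≤ ENNReal.ofReal ((1 + δ) ^ p) * y) : x ≤ y := by
  have hlim : Tendsto (fun δ : ℝ => ENNReal.ofReal ((1 + δ) ^ p) * y) (𝓝[>] 0) (𝓝 y) := by
    have h1 : Tendsto (fun δ : ℝ => (1 + δ) ^ p) (𝓝[>] 0) (𝓝 1) := by
      have : Tendsto (fun δ : ℝ => 1 + δ) (𝓝 0) (𝓝 (1 + 0)) :=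
        tendsto_const_nhds.add tendsto_id
      have := this.rpow_const (p := p) (Or.inl (by norm_num))
      simpa using this.mono_left nhdsWithin_le_nhds
    simpa using ENNReal.Tendsto.mul_const (ENNReal.tendsto_ofReal h1) (Or.inl (by simp))
  exact ge_of_tendsto hlim (eventually_nhdsWithin_of_forall h)

namespace ChiD

variable {d : ℕ}

noncomputable def energy (p : ℝ) (g : (Fin d → ℤ) → ℝ) : ℝ≥0∞ :=
  ∑' (z : Fin d → ℤ) (e : Fin d), ENNReal.ofReal (|g (z + Pi.single e 1) - g z| ^ p)

lemma chiD_le_energy {p : ℝ} {B : Set (Fin d → ℤ)} {g : (Fin d → ℤ) → ℝ}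
    (hg : Summable fun z => g z ^ 2) (hg1 : ∑' z, g z ^ 2 = 1) (hB : Function.support g ⊆ B) :
    chiD d p B ≤ energy p g :=
  iInf_le_of_le ⟨g, hg, hg1, hB⟩ le_rfl

lemma chiD_anti {p : ℝ} {B B' : Set (Fin d → ℤ)} (h : B ⊆ B') :
    chiD d p B' ≤ chiD d p B :=
  le_iInf fun g => chiD_le_energy g.2.1 g.2.2.1 (g.2.2.2.trans h)

lemma energy_const_mul (p c : ℝ) (g : (Fin d → ℤ) → ℝ) :
    energy p (fun z => c * g z) = ENNReal.ofReal (|c| ^ p) * energy p g := by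
  simp only [energy, ← ENNReal.tsum_mul_left, ← mul_sub, abs_mul,
    Real.mul_rpow (abs_nonneg c) (abs_nonneg _),
    ENNReal.ofReal_mul (Real.rpow_nonneg (abs_nonneg c) _)]

lemma chiD_le_rpow_mul_energy {p : ℝ} {B : Set (Fin d → ℤ)} {g : (Fin d → ℤ) → ℝ}
    (hg : Summable fun z => g z ^ 2) (hpos : 0 < ∑' z, g z ^ 2) (hB : Function.support g ⊆ B) :
    chiD d p B ≤ ENNReal.ofReal ((∑' z, g z ^ 2) ^ (-(p / 2))) * energy p g := by
  set N := ∑' z, g z ^ 2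
  set c := N ^ (-(1 / 2 : ℝ))
  have hc : 0 < c := Real.rpow_pos_of_pos hpos _
  have hc2 : c ^ 2 = N⁻¹ := by
    rw [← Real.rpow_natCast, ← Real.rpow_mul hpos.le]
    norm_num [Real.rpow_neg_one]
  have hcg : ∑' z, (c * g z) ^ 2 = 1 := by
    rw [← inv_mul_cancel₀ hpos.ne']
    simp only [mul_pow, tsum_mul_left, hc2, N]
  have hsupp : Function.support (fun z => c * g z) ⊆ B :=
    (Function.support_mul_subset_right (fun _ => c) g).trans hB
  calc chiD d p B ≤ energy p (fun z => c * g z) :=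
        chiD_le_energy (by simpa only [mul_pow] using hg.mul_left (c ^ 2)) hcg hsupp
    _ = _ := by
        rw [energy_const_mul, abs_of_pos hc, ← Real.rpow_mul hpos.le]
        ring_nf

noncomputable def box (d n : ℕ) : Finset (Fin d → ℤ) :=
  Fintype.piFinset fun _ => Finset.Icc (-(n : ℤ)) n

lemma coe_box (n : ℕ) :
    (box d n : Set (Fin d → ℤ)) = {z | ∀ i, z i ∈ Set.Icc (-(n : ℤ)) n} := by
  ext z
  simp only [box, Finset.mem_coe, Fintype.mem_piFinset, Finset.mem_Icc, Set.mem_Icc,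
    Set.mem_ofPred_eq]

lemma mem_box {n : ℕ} {z : Fin d → ℤ} : z ∈ box d n ↔ ‖z‖ ≤ n := by
  rw [box, Fintype.mem_piFinset, pi_norm_le_iff_of_nonneg (Nat.cast_nonneg n)]
  refine forall_congr' fun i => ?_
  rw [Finset.mem_Icc, ← abs_le, Int.norm_eq_abs]
  exact_mod_cast Iff.rfl

lemma box_mono : Monotone (box d) := fun m n hmn z hz =>
  mem_box.2 <| (mem_box.1 hz).trans (by exact_mod_cast hmn)

lemma card_box (d n : ℕ) : #(box d n) = (2 * n + 1) ^ d := by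
  simp only [box, Fintype.card_piFinset, Int.card_Icc, prod_const, card_univ, Fintype.card_fin]
  congr 1
  omega

/-- The paper's cutoff `ξ(x / n)`, with the sup norm in place of the Euclidean one; at `n = 0`
the junk value `‖z‖ / 0 = 0` makes it identically `1`. -/
noncomputable def cutoff (n : ℕ) (z : Fin d → ℤ) : ℝ := min 1 (max 0 (2 - ‖z‖ / n))

lemma cutoff_nonneg (n : ℕ) (z : Fin d → ℤ) : 0 ≤ cutoff n z :=
  le_min zero_le_one (le_max_left _ _)

lemma cutoff_le_one (n : ℕ) (z : Fin d → ℤ) : cutoff n z ≤ 1 := min_le_left _ _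

lemma cutoff_eq_one {n : ℕ} {z : Fin d → ℤ} (h : ‖z‖ ≤ n) : cutoff n z = 1 := by
  refine min_eq_left (le_max_of_le_right ?_)
  have : ‖z‖ / n ≤ 1 := div_le_one_of_le₀ h (Nat.cast_nonneg n)
  linarith

lemma cutoff_eq_zero {n : ℕ} (hn : 0 < n) {z : Fin d → ℤ} (h : 2 * n ≤ ‖z‖) :
    cutoff n z = 0 := by
  have : 2 ≤ ‖z‖ / n := (le_div_iff₀ (by positivity)).2 h
  rw [cutoff, max_eq_left (by linarith), min_eq_right zero_le_one]

lemma abs_cutoff_sub_cutoff_le (n : ℕ) (w z : Fin d → ℤ) :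
    |cutoff n w - cutoff n z| ≤ ‖w - z‖ / n := by
  calc |cutoff n w - cutoff n z| ≤ |(2 - ‖w‖ / n) - (2 - ‖z‖ / n)| := by
        refine (abs_min_sub_min_le_max _ _ _ _).trans (max_le (by simp) ?_)
        exact (abs_max_sub_max_le_max _ _ _ _).trans (max_le (by simp) le_rfl)
    _ = |‖w‖ - ‖z‖| / n := by
        rw [sub_sub_sub_cancel_left, ← sub_div, abs_div, Nat.abs_cast, abs_sub_comm]
    _ ≤ ‖w - z‖ / n := by gcongr; exact abs_norm_sub_norm_le w z

lemma sq_cutoff_mul_le (n : ℕ) (g : (Fin d → ℤ) → ℝ) (z : Fin d → ℤ) :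
    (cutoff n z * g z) ^ 2 ≤ g z ^ 2 := by
  rw [mul_pow]
  exact mul_le_of_le_one_left (sq_nonneg _) (pow_le_one₀ (cutoff_nonneg n z) (cutoff_le_one n z))

lemma summable_cutoff_mul_sq (n : ℕ) {g : (Fin d → ℤ) → ℝ}
    (hg : Summable fun z => g z ^ 2) :
    Summable fun z => (cutoff n z * g z) ^ 2 :=
  hg.of_nonneg_of_le (fun _ => sq_nonneg _) (sq_cutoff_mul_le n g)

lemma tendsto_tsum_cutoff_mul_sq {g : (Fin d → ℤ) → ℝ} (hg : Summable fun z => g z ^ 2) :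
    Tendsto (fun n => ∑' z, (cutoff n z * g z) ^ 2) atTop (𝓝 (∑' z, g z ^ 2)) := by
  refine tendsto_tsum_of_dominated_convergence hg (fun z => tendsto_const_nhds.congr' ?_)
    (Eventually.of_forall fun n z => ?_)
  · filter_upwards [eventually_ge_atTop ⌈‖z‖⌉₊] with n hn
    rw [cutoff_eq_one ((Nat.le_ceil _).trans (by exact_mod_cast hn)), one_mul]
  · rw [Real.norm_of_nonneg (sq_nonneg _)]
    exact sq_cutoff_mul_le n g z

lemma support_cutoff_mul_subset {n : ℕ} (hn : 0 < n) (g : (Fin d → ℤ) → ℝ) :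
    Function.support (fun z => cutoff n z * g z) ⊆ box d (2 * n) := by
  intro z hz
  rw [mem_coe, mem_box]
  by_contra h
  rw [Function.mem_support, cutoff_eq_zero hn (by push_cast at h; linarith), zero_mul] at hz
  exact hz rfl

/-- Outside this set the cutoff is constant across every lattice edge. -/
noncomputable def annulus (d n : ℕ) : Finset (Fin d → ℤ) :=
  (box d (2 * n + 1)).filter fun w => (n : ℝ) - 1 < ‖w‖

lemma mem_annulus {n : ℕ} {w : Fin d → ℤ} :
    w ∈ annulus d n ↔ ‖w‖ ≤ 2 * n + 1 ∧ (n : ℝ) - 1 < ‖w‖ := by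
  rw [annulus, Finset.mem_filter, mem_box]
  push_cast
  rfl

lemma card_annulus_le {n : ℕ} (hn : 0 < n) : #(annulus d n) ≤ (7 * n) ^ d :=
  (card_filter_le _ _).trans <| (card_box d _).trans_le <| Nat.pow_le_pow_left (by omega) d

lemma cutoff_eq_cutoff_of_notMem_annulus {n : ℕ} (hn : 0 < n) {w z : Fin d → ℤ}
    (hwz : ‖w - z‖ ≤ 1) (hw : w ∉ annulus d n) : cutoff n w = cutoff n z := by
  have hz := abs_le.1 <| (abs_norm_sub_norm_le w z).trans hwz
  rw [mem_annulus, not_and_or, not_le, not_lt] at hw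
  rcases hw with hw | hw
  · rw [cutoff_eq_zero hn (by linarith), cutoff_eq_zero hn (by linarith)]
  · rw [cutoff_eq_one (by linarith), cutoff_eq_one (by linarith)]

lemma abs_cutoff_mul_sub_le {n : ℕ} (hn : 0 < n) (g : (Fin d → ℤ) → ℝ)
    {w z : Fin d → ℤ} (hwz : ‖w - z‖ ≤ 1) :
    |cutoff n w * g w - cutoff n z * g z| ≤
      |g w - g z| + (annulus d n : Set (Fin d → ℤ)).indicator (fun w => |g w| / n) w := by
  have hsplit : cutoff n w * g w - cutoff n z * g z =
      cutoff n z * (g w - g z) + (cutoff n w - cutoff n z) * g w := by ring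
  have hvar : |(cutoff n w - cutoff n z) * g w| ≤
      (annulus d n : Set (Fin d → ℤ)).indicator (fun w => |g w| / n) w := by
    by_cases hw : w ∈ annulus d n
    · rw [Set.indicator_of_mem (Finset.mem_coe.2 hw), abs_mul, mul_comm, div_eq_mul_one_div]
      gcongr
      exact (abs_cutoff_sub_cutoff_le n w z).trans (by gcongr)
    · rw [cutoff_eq_cutoff_of_notMem_annulus hn hwz hw, sub_self, zero_mul, abs_zero]
      exact Set.indicator_nonneg (fun _ _ => by positivity) w
  rw [hsplit]
  refine (abs_add_le _ _).trans (add_le_add ?_ hvar)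
  rw [abs_mul, abs_of_nonneg (cutoff_nonneg n z)]
  exact mul_le_of_le_one_left (abs_nonneg _) (cutoff_le_one n z)

lemma tsum_tsum_ofReal_indicator_rpow {p : ℝ} (hp : 0 < p) (s : Finset (Fin d → ℤ))
    {f : (Fin d → ℤ) → ℝ} (hf : ∀ w, 0 ≤ f w) :
    ∑' (z : Fin d → ℤ) (e : Fin d),
        ENNReal.ofReal ((s : Set (Fin d → ℤ)).indicator f (z + Pi.single e 1) ^ p) =
      d * ENNReal.ofReal (∑ w ∈ s, f w ^ p) := by
  set F : (Fin d → ℤ) → ℝ≥0∞ := fun w =>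
    ENNReal.ofReal ((s : Set (Fin d → ℤ)).indicator f w ^ p)
  have hshift (e : Fin d) : ∑' z, F (z + Pi.single e 1) = ∑' w, F w :=
    (Equiv.addRight (Pi.single e 1)).tsum_eq F
  have hfinite : ∑' w, F w = ENNReal.ofReal (∑ w ∈ s, f w ^ p) := by
    rw [tsum_eq_sum (s := s), ENNReal.ofReal_sum_of_nonneg fun w _ => Real.rpow_nonneg (hf w) _]
    · exact sum_congr rfl fun w hw => by simp only [F, Set.indicator_of_mem (mem_coe.2 hw)]
    · intro w hw
      simp only [F, Set.indicator_of_notMem (mt mem_coe.1 hw), Real.zero_rpow hp.ne',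
        ENNReal.ofReal_zero]
  rw [ENNReal.tsum_comm]
  change ∑' (e : Fin d) (z : Fin d → ℤ), F (z + Pi.single e 1) = _
  simp only [hshift, hfinite, tsum_fintype, sum_const, card_univ, Fintype.card_fin, nsmul_eq_mul]

lemma energy_cutoff_mul_le {p δ : ℝ} (hp : 0 < p) (hδ : 0 < δ) {n : ℕ} (hn : 0 < n)
    (g : (Fin d → ℤ) → ℝ) :
    energy p (fun z => cutoff n z * g z) ≤
      ENNReal.ofReal ((1 + δ) ^ p) * energy p g + ENNReal.ofReal ((1 + δ⁻¹) ^ p) *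
        (d * ENNReal.ofReal (∑ w ∈ annulus d n, (|g w| / n) ^ p)) := by
  have herr := tsum_tsum_ofReal_indicator_rpow hp (annulus d n)
    (f := fun w => |g w| / n) fun w => by positivity
  set r : (Fin d → ℤ) → ℝ :=
    (annulus d n : Set (Fin d → ℤ)).indicator fun w => |g w| / n
  have hr : ∀ w, 0 ≤ r w := fun w => Set.indicator_nonneg (fun _ _ => by positivity) w
  have hstep (z : Fin d → ℤ) (e : Fin d) :
      ENNReal.ofReal (|cutoff n (z + Pi.single e 1) * g (z + Pi.single e 1) -
          cutoff n z * g z| ^ p) ≤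
        ENNReal.ofReal ((1 + δ) ^ p) * ENNReal.ofReal (|g (z + Pi.single e 1) - g z| ^ p) +
          ENNReal.ofReal ((1 + δ⁻¹) ^ p) * ENNReal.ofReal (r (z + Pi.single e 1) ^ p) := by
    rw [← ENNReal.ofReal_mul (by positivity), ← ENNReal.ofReal_mul (by positivity),
      ← ENNReal.ofReal_add (by positivity)
        (mul_nonneg (by positivity) (Real.rpow_nonneg (hr _) _))]
    refine ENNReal.ofReal_le_ofReal <| (Real.rpow_le_rpow (abs_nonneg _)
      (abs_cutoff_mul_sub_le hn g ?_) hp.le).trans ?_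
    · simp [Pi.norm_single]
    · exact add_rpow_le_one_add_rpow_mul_add hp.le (abs_nonneg _) (hr _) hδ
  calc energy p (fun z => cutoff n z * g z)
      ≤ ∑' (z : Fin d → ℤ) (e : Fin d),
          (ENNReal.ofReal ((1 + δ) ^ p) * ENNReal.ofReal (|g (z + Pi.single e 1) - g z| ^ p) +
            ENNReal.ofReal ((1 + δ⁻¹) ^ p) * ENNReal.ofReal (r (z + Pi.single e 1) ^ p)) :=
        ENNReal.tsum_le_tsum fun z => ENNReal.tsum_le_tsum fun e => hstep z e
    _ = _ := by simp only [ENNReal.tsum_add, ENNReal.tsum_mul_left, herr, energy]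

lemma sum_annulus_div_rpow_le {p : ℝ} (hp : 0 < p) (hp2 : p < 2) (hdp : d * (1 - p / 2) ≤ p)
    {n : ℕ} (hn : 0 < n) (g : (Fin d → ℤ) → ℝ) :
    ∑ w ∈ annulus d n, (|g w| / n) ^ p ≤
      7 ^ (d * (1 - p / 2)) * (∑ w ∈ annulus d n, g w ^ 2) ^ (p / 2) := by
  have hn1 : (1 : ℝ) ≤ n := by exact_mod_cast hn
  have hcard :
      (#(annulus d n) : ℝ) ^ (1 - p / 2) ≤ 7 ^ (d * (1 - p / 2)) * n ^ (d * (1 - p / 2)) := by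
    rw [← Real.mul_rpow (by norm_num) (by positivity), Real.rpow_mul (by positivity),
      Real.rpow_natCast]
    gcongr
    · linarith
    · exact_mod_cast card_annulus_le hn
  have hn_pow : (n : ℝ) ^ (d * (1 - p / 2)) ≤ n ^ p := Real.rpow_le_rpow_of_exponent_le hn1 hdp
  calc ∑ w ∈ annulus d n, (|g w| / n) ^ p = (∑ w ∈ annulus d n, |g w| ^ p) / n ^ p := by
        rw [sum_div]
        exact sum_congr rfl fun w _ => Real.div_rpow (abs_nonneg _) (Nat.cast_nonneg _) p
    _ ≤ (∑ w ∈ annulus d n, g w ^ 2) ^ (p / 2) *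
          (7 ^ (d * (1 - p / 2)) * n ^ (d * (1 - p / 2))) / n ^ p := by
        gcongr
        exact (sum_abs_rpow_le_sum_sq_rpow_mul_card_rpow hp hp2 _ g).trans (by gcongr)
    _ ≤ 7 ^ (d * (1 - p / 2)) * (∑ w ∈ annulus d n, g w ^ 2) ^ (p / 2) := by
        rw [div_le_iff₀ (by positivity), mul_left_comm, mul_assoc]
        gcongr

lemma tendsto_sum_annulus_sq {g : (Fin d → ℤ) → ℝ} (hg : Summable fun z => g z ^ 2) :
    Tendsto (fun n => ∑ w ∈ annulus d n, g w ^ 2) atTop (𝓝 0) := by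
  have hind : ∀ n, ∑ w ∈ annulus d n, g w ^ 2 =
      ∑' w, (annulus d n : Set (Fin d → ℤ)).indicator (fun w => g w ^ 2) w :=
    fun n => sum_eq_tsum_indicator _ _
  simp_rw [hind]
  rw [← tsum_zero]
  refine tendsto_tsum_of_dominated_convergence hg (fun w => tendsto_const_nhds.congr' ?_)
    (Eventually.of_forall fun n w => ?_)
  · filter_upwards [eventually_ge_atTop (⌈‖w‖⌉₊ + 1)] with n hn
    have hw : ‖w‖ ≤ (n : ℝ) - 1 := by
      have : (⌈‖w‖⌉₊ : ℝ) + 1 ≤ n := by exact_mod_cast hn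
      linarith [Nat.le_ceil ‖w‖]
    rw [Set.indicator_of_notMem (by simp [mem_annulus, hw])]
  · rw [← Real.norm_of_nonneg (sq_nonneg (g w))]
    exact norm_indicator_le_norm_self _ _

lemma tendsto_sum_annulus_div_rpow {p : ℝ} (hp : 0 < p) (hp2 : p < 2)
    (hdp : d * (1 - p / 2) ≤ p) {g : (Fin d → ℤ) → ℝ} (hg : Summable fun z => g z ^ 2) :
    Tendsto (fun n : ℕ => ∑ w ∈ annulus d n, (|g w| / n) ^ p) atTop (𝓝 0) := by
  have hbound : Tendsto (fun n =>
      7 ^ (d * (1 - p / 2)) * (∑ w ∈ annulus d n, g w ^ 2) ^ (p / 2)) atTop (𝓝 0) := by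
    have := ((tendsto_sum_annulus_sq hg).rpow_const (p := p / 2)
      (Or.inr (by positivity))).const_mul ((7 : ℝ) ^ (d * (1 - p / 2)))
    rwa [Real.zero_rpow (by positivity), mul_zero] at this
  refine tendsto_of_tendsto_of_tendsto_of_le_of_le' tendsto_const_nhds hbound
    (Eventually.of_forall fun n => sum_nonneg fun w _ => by positivity) ?_
  filter_upwards [eventually_gt_atTop 0] with n hn using sum_annulus_div_rpow_le hp hp2 hdp hn g

lemma iInf_chiD_box_le_energy {p : ℝ} (hp : 0 < p) (hp2 : p < 2) (hdp : d * (1 - p / 2) ≤ p)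
    {g : (Fin d → ℤ) → ℝ} (hg : Summable fun z => g z ^ 2) (hg1 : ∑' z, g z ^ 2 = 1) :
    ⨅ n, chiD d p (box d n) ≤ energy p g := by
  refine le_of_forall_pos_le_ofReal_one_add_rpow_mul (p := p) fun δ hδ => ?_
  set A := ENNReal.ofReal ((1 + δ) ^ p)
  set B := ENNReal.ofReal ((1 + δ⁻¹) ^ p)
  set N := fun n => ∑' z, (cutoff n z * g z) ^ 2
  set ε := fun n : ℕ => ∑ w ∈ annulus d n, (|g w| / n) ^ p
  have hN : Tendsto N atTop (𝓝 1) := hg1 ▸ tendsto_tsum_cutoff_mul_sq hg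
  have hle : ∀ᶠ n in atTop, ⨅ m, chiD d p (box d m) ≤
      ENNReal.ofReal (N n ^ (-(p / 2))) * (A * energy p g + B * (d * ENNReal.ofReal (ε n))) := by
    filter_upwards [hN.eventually (lt_mem_nhds one_pos), eventually_gt_atTop 0] with n hNn hn
    calc ⨅ m, chiD d p (box d m) ≤ chiD d p (box d (2 * n)) := iInf_le _ _
      _ ≤ ENNReal.ofReal (N n ^ (-(p / 2))) * energy p (fun z => cutoff n z * g z) :=
          chiD_le_rpow_mul_energy (summable_cutoff_mul_sq n hg) hNn
            (support_cutoff_mul_subset hn g)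
      _ ≤ _ := by gcongr; exact energy_cutoff_mul_le hp hδ hn g
  have hscale : Tendsto (fun n => ENNReal.ofReal (N n ^ (-(p / 2)))) atTop (𝓝 1) := by
    simpa using ENNReal.tendsto_ofReal (hN.rpow_const (Or.inl one_ne_zero))
  have herr : Tendsto (fun n => A * energy p g + B * (d * ENNReal.ofReal (ε n))) atTop
      (𝓝 (A * energy p g)) := by
    have := ENNReal.tendsto_ofReal (tendsto_sum_annulus_div_rpow hp hp2 hdp hg)
    have := ENNReal.Tendsto.const_mul (a := B) (ENNReal.Tendsto.const_mul this
      (Or.inr (ENNReal.natCast_ne_top d))) (Or.inr ENNReal.ofReal_ne_top)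
    simpa using tendsto_const_nhds.add this
  have := ENNReal.Tendsto.mul hscale (Or.inl one_ne_zero) herr (Or.inr ENNReal.one_ne_top)
  exact ge_of_tendsto (by simpa using this) hle

lemma iInf_chiD_box_eq_chiD_univ {p : ℝ} (hp : 0 < p) (hp2 : p < 2)
    (hdp : d * (1 - p / 2) ≤ p) :
    ⨅ n, chiD d p (box d n) = chiD d p Set.univ :=
  le_antisymm (le_iInf fun g => iInf_chiD_box_le_energy hp hp2 hdp g.2.1 g.2.2.1)
    (le_iInf fun _ => chiD_anti (Set.subset_univ _))

lemma tendsto_chiD_box {p : ℝ} (hp : 0 < p) (hp2 : p < 2) (hdp : d * (1 - p / 2) ≤ p) :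
    Tendsto (fun n => chiD d p (box d n)) atTop (𝓝 (chiD d p Set.univ)) := by
  rw [← iInf_chiD_box_eq_chiD_univ hp hp2 hdp]
  exact tendsto_atTop_iInf fun m n hmn => chiD_anti (coe_subset.2 (box_mono hmn))

end ChiD

/-- If η ≥ d/2 and p = 2η/(η+1), then χ^d(Q_n) → χ^d(ℤ^d) as n → ∞,
where Q_n = [-n,n]^d ∩ ℤ^d. -/
theorem chiD_boxes_tendsto_chiD_lattice (d : ℕ) (hd : 1 ≤ d) (η : ℝ)
    (hη : (d : ℝ) / 2 ≤ η) :
    Filter.Tendsto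
      (fun n : ℕ => chiD d (2 * η / (η + 1)) {z | ∀ i, z i ∈ Set.Icc (-(n : ℤ)) n})
      Filter.atTop (nhds (chiD d (2 * η / (η + 1)) Set.univ)) := by
  have hη0 : 0 < η := by
    have : (1 : ℝ) ≤ d := by exact_mod_cast hd
    linarith
  simp_rw [← ChiD.coe_box]
  refine ChiD.tendsto_chiD_box (by positivity) ?_ ?_
  · rw [div_lt_iff₀ (by positivity)]
    linarith
  · rw [show (d : ℝ) * (1 - 2 * η / (η + 1) / 2) = d / (η + 1) by field_simp; ring]
    gcongr
    linarith
end
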